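/- Let V be a Weibull random variable with scale c > 0 and shape k > 0, let a > 0, and let 0 < V_ci < V_r. Then the first and second moments of the harvested wind power restricted to the continuous range are E[(a·V³)·1_{V_ci < V ≤ V_r}] = a·c³·[γ(1 + 3/k, (V_r/c)^k) − γ(1 + 3/k, (V_ci/c)^k)] and E[(a·V³)²·1_{V_ci < V ≤ V_r}] = a²·c⁶·[γ(1 + 6/k, (V_r/c)^k) − γ(1 + 6/k, (V_ci/c)^k)]. (Corollary 3: first and second moments of the harvested wind power.) -/

import Mathlib

open MeasureTheory Real

/-- The lower incomplete gamma function `γ(s, x) = ∫₀ˣ t^{s−1}·e^{−t} dt`. -/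
noncomputable def lowerGamma (s x : ℝ) : ℝ :=
  ∫ t in (0 : ℝ)..x, t ^ (s - 1) * Real.exp (-t)

/-- Weibull density with scale `c > 0` and shape `k > 0` (zero for `v ≤ 0`). -/
noncomputable def weibullDensity (c k v : ℝ) : ℝ :=
  if 0 < v then (k / c) * (v / c) ^ (k - 1) * Real.exp (-(v / c) ^ k) else 0

/-!
Pushing `μ` forward along `V` turns both moments into `∫_{V_ci}^{V_r} f(v) v^p dv` with `p = 3, 6`,
where `f` is the Weibull density. Under the substitution `t = (v/c)^k` this integrand becomes
`c^p t^{p/k} e^{-t} dt`, so `v ↦ c^p γ(1 + p/k, (v/c)^k)` is an antiderivative of `f(v) v^p` on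
`(0, ∞)`, and the fundamental theorem of calculus gives the closed form.
-/

open Set

theorem weibullDensity_nonneg {c k : ℝ} (hc : 0 < c) (hk : 0 < k) (v : ℝ) :
    0 ≤ weibullDensity c k v := by
  unfold weibullDensity
  split_ifs with hv
  · have : 0 < v / c := div_pos hv hc
    positivity
  · exact le_rfl

theorem measurable_weibullDensity (c k : ℝ) : Measurable (weibullDensity c k) :=
  Measurable.ite measurableSet_Ioi (by fun_prop) measurable_const

theorem intervalIntegrable_rpow_mul_exp_neg {s : ℝ} (hs : 0 < s) (x y : ℝ) :
    IntervalIntegrable (fun t : ℝ => t ^ (s - 1) * exp (-t)) volume x y :=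
  (intervalIntegral.intervalIntegrable_rpow' (by linarith)).mul_continuousOn
    (continuous_neg.rexp).continuousOn

theorem hasDerivAt_lowerGamma {s x : ℝ} (hs : 0 < s) (hx : 0 < x) :
    HasDerivAt (lowerGamma s) (x ^ (s - 1) * exp (-x)) x := by
  have hcont : ContinuousOn (fun t : ℝ => t ^ (s - 1) * exp (-t)) (Ioi 0) := fun t ht =>
    ((continuousAt_rpow_const t (s - 1) (Or.inl (ne_of_gt ht))).mul
      (continuous_neg.rexp).continuousAt).continuousWithinAt
  exact intervalIntegral.integral_hasDerivAt_right (intervalIntegrable_rpow_mul_exp_neg hs 0 x)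
    (hcont.stronglyMeasurableAtFilter isOpen_Ioi x hx)
    (hcont.continuousAt (isOpen_Ioi.mem_nhds hx))

theorem hasDerivAt_lowerGamma_weibull {c k p v : ℝ} (hc : 0 < c) (hk : 0 < k) (hp : -k < p)
    (hv : 0 < v) :
    HasDerivAt (fun v => c ^ p * lowerGamma (1 + p / k) ((v / c) ^ k))
      (weibullDensity c k v * v ^ p) v := by
  have hvc : 0 < v / c := div_pos hv hc
  have hs : 0 < 1 + p / k := by
    rw [← div_self hk.ne', ← add_div]; exact div_pos (by linarith) hk
  have hu : HasDerivAt (fun v => (v / c) ^ k) (1 / c * k * (v / c) ^ (k - 1)) v :=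
    ((hasDerivAt_id' v).div_const c).rpow_const (Or.inl hvc.ne')
  refine (((hasDerivAt_lowerGamma hs (rpow_pos_of_pos hvc k)).comp v hu).const_mul
    (c ^ p)).congr_deriv ?_
  have hpow : ((v / c) ^ k) ^ (1 + p / k - 1) = v ^ p / c ^ p := by
    rw [add_sub_cancel_left, ← rpow_mul hvc.le, mul_div_cancel₀ _ hk.ne',
      div_rpow hv.le hc.le]
  rw [weibullDensity, if_pos hv, hpow]
  field_simp [(rpow_pos_of_pos hc p).ne']

theorem integral_Ioc_weibullDensity_mul_rpow {c k p x y : ℝ} (hc : 0 < c) (hk : 0 < k)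
    (hp : -k < p) (hx : 0 < x) (hxy : x ≤ y) :
    ∫ v in Ioc x y, weibullDensity c k v * v ^ p =
      c ^ p * (lowerGamma (1 + p / k) ((y / c) ^ k) - lowerGamma (1 + p / k) ((x / c) ^ k)) := by
  have hderiv : ∀ v ∈ Icc x y, HasDerivAt (fun v => c ^ p * lowerGamma (1 + p / k) ((v / c) ^ k))
      (weibullDensity c k v * v ^ p) v := fun v hv =>
    hasDerivAt_lowerGamma_weibull hc hk hp (hx.trans_le hv.1)
  have hcont := HasDerivAt.continuousOn hderiv
  have hderiv' : ∀ v ∈ Ioo x y, HasDerivAt _ _ v := fun v hv => hderiv v (Ioo_subset_Icc_self hv)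
  have hnonneg : ∀ v ∈ Ioo x y, 0 ≤ weibullDensity c k v * v ^ p := fun v hv =>
    mul_nonneg (weibullDensity_nonneg hc hk v) (rpow_nonneg (hx.trans hv.1).le p)
  rw [← intervalIntegral.integral_of_le hxy, mul_sub,
    intervalIntegral.integral_eq_sub_of_hasDerivAt_of_le hxy hcont hderiv'
      (intervalIntegral.intervalIntegrable_deriv_of_nonneg (uIcc_of_le hxy ▸ hcont)
        (by simpa [hxy] using hderiv') (by simpa [hxy] using hnonneg))]

theorem setIntegral_preimage_of_map_eq_withDensity {Ω α E : Type*} [MeasurableSpace Ω]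
    [MeasurableSpace α] [NormedAddCommGroup E] [NormedSpace ℝ E] {μ : Measure Ω} {ν : Measure α}
    {X : Ω → α} (hX : Measurable X) {f : α → ℝ} (hf : AEMeasurable f ν) (hf0 : ∀ x, 0 ≤ f x)
    (hlaw : μ.map X = ν.withDensity fun x => ENNReal.ofReal (f x))
    {g : α → E} (hg : AEStronglyMeasurable g (μ.map X)) {s : Set α} (hs : MeasurableSet s) :
    ∫ ω in X ⁻¹' s, g (X ω) ∂μ = ∫ x in s, f x • g x ∂ν := by
  rw [← setIntegral_map hs hg hX.aemeasurable, hlaw]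
  change ∫ x in s, g x ∂ν.withDensity (fun x => ((f x).toNNReal : ENNReal)) = _
  rw [setIntegral_withDensity_eq_setIntegral_smul₀ hf.real_toNNReal.restrict g hs]
  simp only [NNReal.smul_def, coe_toNNReal _ (hf0 _)]

theorem setIntegral_rpow_of_map_eq_weibull {Ω : Type*} [MeasurableSpace Ω] {μ : Measure Ω}
    {c k p x y : ℝ} (hc : 0 < c) (hk : 0 < k) (hp : -k < p) (hx : 0 < x) (hxy : x ≤ y)
    {V : Ω → ℝ} (hV : Measurable V)
    (hlaw : μ.map V = volume.withDensity fun v => ENNReal.ofReal (weibullDensity c k v)) :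
    ∫ ω in {ω | x < V ω ∧ V ω ≤ y}, V ω ^ p ∂μ =
      c ^ p * (lowerGamma (1 + p / k) ((y / c) ^ k) - lowerGamma (1 + p / k) ((x / c) ^ k)) := by
  rw [← integral_Ioc_weibullDensity_mul_rpow hc hk hp hx hxy]
  have hpow : Measurable fun v : ℝ => v ^ p := by fun_prop
  exact setIntegral_preimage_of_map_eq_withDensity hV (measurable_weibullDensity c k).aemeasurable
    (weibullDensity_nonneg hc hk) hlaw hpow.aestronglyMeasurable measurableSet_Ioc

theorem wind_power_first_second_moments_general
    {Ω : Type*} [MeasurableSpace Ω] (μ : Measure Ω)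
    (a c k Vci Vr : ℝ) (hc : 0 < c) (hk : 0 < k)
    (hVci : 0 < Vci) (hVr : Vci < Vr)
    (V : Ω → ℝ) (hV : Measurable V)
    (hlaw : μ.map V = volume.withDensity fun v => ENNReal.ofReal (weibullDensity c k v)) :
    ∫ ω in {ω | Vci < V ω ∧ V ω ≤ Vr}, a * V ω ^ 3 ∂μ =
      a * c ^ 3
        * (lowerGamma (1 + 3 / k) ((Vr / c) ^ k) - lowerGamma (1 + 3 / k) ((Vci / c) ^ k)) ∧
    ∫ ω in {ω | Vci < V ω ∧ V ω ≤ Vr}, (a * V ω ^ 3) ^ 2 ∂μ =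
      a ^ 2 * c ^ 6
        * (lowerGamma (1 + 6 / k) ((Vr / c) ^ k) - lowerGamma (1 + 6 / k) ((Vci / c) ^ k)) := by
  have moment (p : ℝ) (hp : 0 < p) :=
    setIntegral_rpow_of_map_eq_weibull (μ := μ) (p := p) hc hk (by linarith) hVci hVr.le hV hlaw
  constructor
  · calc ∫ ω in {ω | Vci < V ω ∧ V ω ≤ Vr}, a * V ω ^ 3 ∂μ
        = a * ∫ ω in {ω | Vci < V ω ∧ V ω ≤ Vr}, V ω ^ (3 : ℝ) ∂μ := by
          rw [← integral_const_mul]; norm_cast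
      _ = _ := by rw [moment 3 (by norm_num)]; norm_cast; ring
  · calc ∫ ω in {ω | Vci < V ω ∧ V ω ≤ Vr}, (a * V ω ^ 3) ^ 2 ∂μ
        = a ^ 2 * ∫ ω in {ω | Vci < V ω ∧ V ω ≤ Vr}, V ω ^ (6 : ℝ) ∂μ := by
          rw [← integral_const_mul]; norm_cast; simp only [mul_pow, ← pow_mul]
      _ = _ := by rw [moment 6 (by norm_num)]; norm_cast; ring

/-- **Corollary 3 (first and second moments of the harvested wind power).**
`E[(a·V³)·1_{V_ci < V ≤ V_r}] = a·c³·[γ(1+3/k,(V_r/c)^k) − γ(1+3/k,(V_ci/c)^k)]` and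
`E[(a·V³)²·1_{V_ci < V ≤ V_r}] = a²·c⁶·[γ(1+6/k,(V_r/c)^k) − γ(1+6/k,(V_ci/c)^k)]`. -/
theorem wind_power_first_second_moments
    {Ω : Type*} [MeasurableSpace Ω] (μ : Measure Ω) [IsProbabilityMeasure μ]
    (a c k Vci Vr : ℝ) (ha : 0 < a) (hc : 0 < c) (hk : 0 < k)
    (hVci : 0 < Vci) (hVr : Vci < Vr)
    (V : Ω → ℝ) (hV : Measurable V)
    (hlaw : μ.map V = volume.withDensity fun v => ENNReal.ofReal (weibullDensity c k v)) :
    ∫ ω in {ω | Vci < V ω ∧ V ω ≤ Vr}, a * V ω ^ 3 ∂μ =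
      a * c ^ 3
        * (lowerGamma (1 + 3 / k) ((Vr / c) ^ k) - lowerGamma (1 + 3 / k) ((Vci / c) ^ k)) ∧
    ∫ ω in {ω | Vci < V ω ∧ V ω ≤ Vr}, (a * V ω ^ 3) ^ 2 ∂μ =
      a ^ 2 * c ^ 6
        * (lowerGamma (1 + 6 / k) ((Vr / c) ^ k) - lowerGamma (1 + 6 / k) ((Vci / c) ^ k)) :=
  wind_power_first_second_moments_general μ a c k Vci Vr hc hk hVci hVr V hV hlaw
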